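/- arXiv:2205.15740 — 2 statements merged into one kernel-verified Lean document; each statement's English description precedes it below -/
import Mathlib

section
/- Let n ≥ 1 and P = Z/2^nZ. Then SpecR(P) = {2^i : 1 ≤ i ≤ n}. In particular, 1 is not a Reidemeister number of any automorphism of Z/2^nZ. -/
/-- The Reidemeister number of an (additive) endomorphism `φ`: the number of
`φ`-twisted conjugacy classes, where `x` and `y` are `φ`-conjugate iff
`x = z + y - φ z` for some `z`. -/
noncomputable def twistedClasses {A : Type*} [AddCommGroup A] (φ : A →+ A) : ℕ :=
  Nat.card (Quot (fun x y : A => ∃ z : A, x = z + y - φ z))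

/-- The Reidemeister spectrum: the set of Reidemeister numbers of automorphisms. -/
noncomputable def reidSpec (A : Type*) [AddCommGroup A] : Set ℕ :=
  {r | ∃ φ : A ≃+ A, twistedClasses φ.toAddMonoidHom = r}

/-!
The twisted classes of `φ` are the cosets of the image of `id - φ`. An automorphism of
`ZMod m` is multiplication by a unit `u`, so `id - φ` is multiplication by `1 - u` and its image
has index `gcd(m, 1 - u)`. For `m = 2 ^ n` every unit is odd, so this gcd is `2 ^ i` with
`1 ≤ i ≤ n`; conversely `2 ^ i` arises from `u = 1 - 2 ^ i`, a unit because `2 ^ i` is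
nilpotent.
-/

open AddSubgroup

theorem twistedClasses_eq_index {A : Type*} [AddCommGroup A] (φ : A →+ A) :
    twistedClasses φ = (AddMonoidHom.id A - φ).range.index := by
  refine Nat.card_congr (Quot.congrRight fun x y => ?_)
  rw [QuotientAddGroup.leftRel_apply]
  constructor
  · rintro ⟨z, rfl⟩
    exact ⟨-z, by simp; abel⟩
  · rintro ⟨z, hz⟩
    refine ⟨-z, ?_⟩
    have hx : x = y - (z - φ z) := by
      rw [show z - φ z = -x + y from hz]; abel
    rw [hx, map_neg]; abel

namespace ZMod

theorem zmultiples_one_eq_top (m : ℕ) : zmultiples (1 : ZMod m) = ⊤ :=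
  (eq_top_iff' _).mpr fun x => by
    obtain ⟨k, rfl⟩ := intCast_surjective x
    exact intCast_mem_zmultiples_one k

theorem addMonoidHom_range_eq_zmultiples {m : ℕ} {A : Type*} [AddGroup A] (f : ZMod m →+ A) :
    f.range = zmultiples (f 1) := by
  rw [AddMonoidHom.range_eq_map, ← zmultiples_one_eq_top, AddMonoidHom.map_zmultiples]

theorem index_zmultiples_eq_gcd {m : ℕ} [NeZero m] (c : ZMod m) :
    (zmultiples c).index = m.gcd c.val := by
  have hord : addOrderOf c = m / m.gcd c.val := by
    simpa using addOrderOf_coe c.val (NeZero.ne m)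
  have hpos : m / m.gcd c.val ≠ 0 :=
    (Nat.div_pos (Nat.gcd_le_left _ (NeZero.pos m)) (Nat.gcd_pos_of_pos_left _ (NeZero.pos m))).ne'
  have h := (zmultiples c).index_mul_card
  rw [Nat.card_zmultiples, hord, Nat.card_zmod] at h
  rw [Nat.eq_div_of_mul_eq_left hpos h, Nat.div_div_self (Nat.gcd_dvd_left _ _) (NeZero.ne m)]

theorem gcd_val_natCast (m k : ℕ) : m.gcd (k : ZMod m).val = m.gcd k := by
  rw [val_natCast, Nat.gcd_comm, ← Nat.gcd_rec]

theorem two_dvd_val_one_sub_unit {m : ℕ} [NeZero m] (hm : 2 ∣ m) (u : (ZMod m)ˣ) :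
    2 ∣ (1 - (u : ZMod m)).val := by
  have hu : castHom hm (ZMod 2) u = 1 := by
    have units_two : ∀ w : ZMod 2, IsUnit w → w = 1 := by decide
    exact units_two _ (u.isUnit.map _)
  rw [← natCast_eq_zero_iff, natCast_val, ← castHom_apply (h := hm), map_sub, map_one, hu,
    sub_self]

theorem isNilpotent_pow_of_pos (p n : ℕ) {i : ℕ} (hi : 0 < i) :
    IsNilpotent ((p : ZMod (p ^ n)) ^ i) := by
  refine ⟨n, ?_⟩
  rw [← pow_mul]
  exact_mod_cast (natCast_eq_zero_iff _ _).mpr (pow_dvd_pow p (Nat.le_mul_of_pos_left n hi))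

end ZMod

theorem twistedClasses_zmod {m : ℕ} [NeZero m] (φ : ZMod m →+ ZMod m) :
    twistedClasses φ = m.gcd (1 - φ 1).val := by
  rw [twistedClasses_eq_index, ZMod.addMonoidHom_range_eq_zmultiples, ZMod.index_zmultiples_eq_gcd]
  rfl

theorem reidSpec_zmod (m : ℕ) [NeZero m] :
    reidSpec (ZMod m) = Set.range fun u : (ZMod m)ˣ => m.gcd (1 - (u : ZMod m)).val := by
  ext r
  constructor
  · rintro ⟨φ, rfl⟩
    refine ⟨(ZMod.AddAutEquivUnits m φ).toMul, ?_⟩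
    simp [twistedClasses_zmod]
  · rintro ⟨u, rfl⟩
    refine ⟨(ZMod.AddAutEquivUnits m).symm (.ofMul u), ?_⟩
    have h1 : ((ZMod.AddAutEquivUnits m).symm (.ofMul u)).toAddMonoidHom 1 = u := mul_one _
    rw [twistedClasses_zmod, h1]

theorem range_gcd_val_one_sub_unit_two_pow {n : ℕ} (hn : n ≠ 0) :
    (Set.range fun u : (ZMod (2 ^ n))ˣ => (2 ^ n).gcd (1 - (u : ZMod (2 ^ n))).val) =
      {r | ∃ i, 1 ≤ i ∧ i ≤ n ∧ r = 2 ^ i} := by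
  ext r
  constructor
  · rintro ⟨u, rfl⟩
    obtain ⟨i, hin, hgi⟩ := (Nat.dvd_prime_pow Nat.prime_two).mp (Nat.gcd_dvd_left _ _)
    have h2 : 2 ∣ 2 ^ i := hgi ▸ Nat.dvd_gcd (dvd_pow_self 2 hn)
      (ZMod.two_dvd_val_one_sub_unit (dvd_pow_self 2 hn) u)
    refine ⟨i, Nat.one_le_iff_ne_zero.mpr ?_, hin, hgi⟩
    rintro rfl
    norm_num at h2
  · rintro ⟨i, hi, hin, rfl⟩
    refine ⟨(ZMod.isNilpotent_pow_of_pos 2 n hi).isUnit_one_sub.unit, ?_⟩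
    have hcast : ((2 : ℕ) : ZMod (2 ^ n)) ^ i = ((2 ^ i : ℕ) : ZMod (2 ^ n)) := by push_cast; rfl
    simp only [IsUnit.unit_spec, sub_sub_cancel]
    rw [hcast, ZMod.gcd_val_natCast, Nat.gcd_eq_right (pow_dvd_pow 2 hin)]

theorem stmt_17 (n : ℕ) (hn : 1 ≤ n) :
    reidSpec (ZMod (2 ^ n)) = {r | ∃ i, 1 ≤ i ∧ i ≤ n ∧ r = 2 ^ i} ∧
      1 ∉ reidSpec (ZMod (2 ^ n)) := by
  have hspec : reidSpec (ZMod (2 ^ n)) = {r | ∃ i, 1 ≤ i ∧ i ≤ n ∧ r = 2 ^ i} := by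
    rw [reidSpec_zmod, range_gcd_val_one_sub_unit_two_pow (by omega)]
  refine ⟨hspec, ?_⟩
  rw [hspec]
  rintro ⟨i, hi, -, h⟩
  have : 1 < 2 ^ i := Nat.one_lt_two_pow (by omega)
  omega
end

section
/- Let n ≥ 1 and P = Z/2^nZ ⊕ Z/2^{n+1}Z. Then SpecR(P) = {2^i : 1 ≤ i ≤ 2n+1}. -/
/-!
The `φ`-twisted classes of an abelian group `A` are the cosets of the image of `1 - φ`, so for
finite `A` their number is `|A / (1 - φ)A| = |ker (1 - φ)|`, the number of fixed points of `φ`. For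
`P = ℤ/2ⁿ × ℤ/2ⁿ⁺¹` these form a subgroup of `P`, so their number is a power of two at most
`2²ⁿ⁺¹`; it is at least `2`, because `(0, 2ⁿ)` is the unique nonzero element of `2ⁿP` and hence
fixed by every automorphism. Conversely, `x ↦ (1 + 2ʲ)x` on `ℤ/2ᵐ` has exactly `2ʲ` fixed points
for `1 ≤ j ≤ m`, which produces every `2ⁱ` with `2 ≤ i ≤ 2n + 1` on the product, while the value
`2` comes from `1 + N`, where `N (x, y) = (y mod 2ⁿ, 2x)` satisfies `N² = 2`.
-/

open Function

section FixedPoints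

variable {A : Type*} [AddCommGroup A]

theorem twistedClasses_eq_index_range (φ : A →+ A) :
    twistedClasses φ = (AddMonoidHom.id A - φ).range.index := by
  refine Nat.card_congr (Quot.congrRight fun x y => ?_)
  simp only [QuotientAddGroup.leftRel_apply, AddMonoidHom.mem_range, AddMonoidHom.sub_apply,
    AddMonoidHom.id_apply]
  constructor
  · rintro ⟨z, rfl⟩
    exact ⟨-z, by rw [map_neg]; abel⟩
  · rintro ⟨z, hz⟩
    refine ⟨-z, ?_⟩
    rw [map_neg, ← sub_eq_zero, ← sub_eq_zero.mpr hz]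
    abel

theorem coe_ker_id_sub_eq_fixedPoints (φ : A →+ A) :
    ((AddMonoidHom.id A - φ).ker : Set A) = fixedPoints φ := by
  ext x
  rw [SetLike.mem_coe, AddMonoidHom.mem_ker, AddMonoidHom.sub_apply, AddMonoidHom.id_apply,
    sub_eq_zero, mem_fixedPoints, IsFixedPt, eq_comm]

theorem twistedClasses_eq_card_fixedPoints [Finite A] (φ : A →+ A) :
    twistedClasses φ = Nat.card (fixedPoints φ) := by
  rw [twistedClasses_eq_index_range, AddSubgroup.index_range, ← coe_ker_id_sub_eq_fixedPoints]
  rfl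

theorem card_fixedPoints_dvd_card [Finite A] (φ : A →+ A) :
    Nat.card (fixedPoints φ) ∣ Nat.card A := by
  rw [← coe_ker_id_sub_eq_fixedPoints]
  exact AddSubgroup.card_addSubgroup_dvd_card _

theorem reidSpec_eq_range_card_fixedPoints [Finite A] :
    reidSpec A = Set.range fun φ : A ≃+ A => Nat.card (fixedPoints φ) := by
  ext r
  simp only [reidSpec, Set.mem_range, twistedClasses_eq_card_fixedPoints]
  rfl

theorem fixedPoints_prodCongr {B : Type*} [AddCommGroup B] (f : A ≃+ A) (g : B ≃+ B) :
    fixedPoints (f.prodCongr g) = fixedPoints f ×ˢ fixedPoints g :=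
  Set.ext fun _ => Prod.ext_iff

theorem card_fixedPoints_prodCongr {B : Type*} [AddCommGroup B] (f : A ≃+ A) (g : B ≃+ B) :
    Nat.card (fixedPoints (f.prodCongr g)) =
      Nat.card (fixedPoints f) * Nat.card (fixedPoints g) := by
  simp only [Nat.card_coe_set_eq, fixedPoints_prodCongr, Set.ncard_prod]

end FixedPoints

namespace ZMod

theorem card_fixedPoints_smul_unit {N : ℕ} [NeZero N] (u : (ZMod N)ˣ) (d : ℕ)
    (hu : (u : ZMod N) = 1 + d) :
    Nat.card (fixedPoints (DistribMulAction.toAddEquiv (ZMod N) u)) = N.gcd d := by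
  have hfix : fixedPoints (DistribMulAction.toAddEquiv (ZMod N) u) =
      ((nsmulAddMonoidHom d : ZMod N →+ ZMod N).ker : Set (ZMod N)) := by
    ext x
    simp [IsFixedPt, Units.smul_def, hu, add_mul, nsmul_eq_mul]
  rw [hfix, SetLike.coe_sort_coe, IsAddCyclic.card_nsmulAddMonoidHom_ker, Nat.card_zmod]

theorem exists_addAut_card_fixedPoints_two_pow {m j : ℕ} (hj : 1 ≤ j) (hjm : j ≤ m) :
    ∃ ψ : ZMod (2 ^ m) ≃+ ZMod (2 ^ m), Nat.card (fixedPoints ψ) = 2 ^ j := by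
  have hnil : IsNilpotent ((2 ^ j : ℕ) : ZMod (2 ^ m)) :=
    ⟨m, by rw [← Nat.cast_pow, ← pow_mul, mul_comm, pow_mul, Nat.cast_pow, natCast_self,
      zero_pow (by omega)]⟩
  exact ⟨_, (card_fixedPoints_smul_unit hnil.isUnit_one_add.unit _ rfl).trans
    (Nat.gcd_eq_right (pow_dvd_pow 2 hjm))⟩

section

variable (m : ℕ)

theorem natCast_mul_two_eq_zero : (m : ZMod (m * 2)) * 2 = 0 := by
  exact_mod_cast natCast_self (m * 2)

def doublingHom : ZMod m →+ ZMod (m * 2) :=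
  lift m ⟨zmultiplesHom _ 2, by
    simp only [zmultiplesHom_apply, zsmul_eq_mul, Int.cast_natCast]
    exact natCast_mul_two_eq_zero m⟩

theorem doublingHom_intCast (k : ℤ) : doublingHom m k = k • 2 := by
  simp [doublingHom, lift_coe]

theorem doublingHom_injective : Injective (doublingHom m) := by
  rw [doublingHom, lift_injective]
  intro k hk
  have hk' : ((k * 2 : ℤ) : ZMod (m * 2)) = 0 := by simpa using hk
  rw [intCast_zmod_eq_zero_iff_dvd] at hk' ⊢
  push_cast at hk'
  exact (mul_dvd_mul_iff_right two_ne_zero).mp hk'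

theorem castHom_doublingHom (x : ZMod m) :
    castHom (dvd_mul_right m 2) (ZMod m) (doublingHom m x) = 2 • x := by
  obtain ⟨k, rfl⟩ := intCast_surjective x
  rw [doublingHom_intCast, map_zsmul, map_ofNat, zsmul_eq_mul, nsmul_eq_mul, Nat.cast_ofNat,
    mul_comm]

theorem doublingHom_castHom (y : ZMod (m * 2)) :
    doublingHom m (castHom (dvd_mul_right m 2) (ZMod m) y) = 2 • y := by
  obtain ⟨k, rfl⟩ := intCast_surjective y
  simp [doublingHom_intCast, mul_comm]

variable [NeZero m]

theorem natCast_ne_zero_mul_two : (m : ZMod (m * 2)) ≠ 0 := by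
  rw [Ne, natCast_eq_zero_iff]
  intro h
  have := Nat.le_of_dvd (Nat.pos_of_neZero m) h
  have := NeZero.pos m
  omega

theorem two_nsmul_eq_zero_iff {y : ZMod (m * 2)} : 2 • y = 0 ↔ y = 0 ∨ y = m := by
  let K : Set (ZMod (m * 2)) := (nsmulAddMonoidHom 2 : ZMod (m * 2) →+ _).ker
  have hsub : {0, (m : ZMod (m * 2))} ⊆ K := by
    rintro _ (rfl | rfl)
    · exact zero_mem _
    · change 2 • (m : ZMod (m * 2)) = 0
      rw [nsmul_eq_mul, Nat.cast_ofNat, mul_comm (2 : ZMod (m * 2)), natCast_mul_two_eq_zero]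
  have hK : K.ncard = 2 := by
    rw [← Nat.card_coe_set_eq, SetLike.coe_sort_coe, IsAddCyclic.card_nsmulAddMonoidHom_ker,
      Nat.card_zmod, Nat.gcd_mul_left_left]
  have hKeq := Set.eq_of_subset_of_ncard_le hsub
    (by rw [hK, Set.ncard_pair (natCast_ne_zero_mul_two m).symm])
  exact (Set.ext_iff.mp hKeq y).symm

end

end ZMod

section DoubledProduct

open ZMod

variable (m : ℕ)

def antidiagHom : ZMod m × ZMod (m * 2) →+ ZMod m × ZMod (m * 2) :=
  ((castHom (dvd_mul_right m 2) (ZMod m)).toAddMonoidHom.comp (AddMonoidHom.snd _ _)).prod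
    ((doublingHom m).comp (AddMonoidHom.fst _ _))

theorem antidiagHom_apply (p : ZMod m × ZMod (m * 2)) :
    antidiagHom m p = (castHom (dvd_mul_right m 2) (ZMod m) p.2, doublingHom m p.1) :=
  rfl

theorem antidiagHom_antidiagHom (p : ZMod m × ZMod (m * 2)) :
    antidiagHom m (antidiagHom m p) = 2 • p := by
  ext <;> simp only [antidiagHom_apply, castHom_doublingHom, doublingHom_castHom, Prod.smul_fst,
    Prod.smul_snd]

def oneAddAntidiagEquiv : ZMod m × ZMod (m * 2) ≃+ ZMod m × ZMod (m * 2) where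
  toFun p := p + antidiagHom m p
  invFun p := antidiagHom m p - p
  left_inv p := by
    simp only [map_add, antidiagHom_antidiagHom, two_nsmul]
    abel
  right_inv p := by
    simp only [map_sub, antidiagHom_antidiagHom, two_nsmul]
    abel
  map_add' p q := by
    simp only [map_add]
    abel

variable [NeZero m]

theorem fixedPoints_oneAddAntidiagEquiv :
    fixedPoints (oneAddAntidiagEquiv m) = {0, (0, (m : ZMod (m * 2)))} := by
  ext ⟨x, y⟩
  have hy : castHom (dvd_mul_right m 2) (ZMod m) y = 0 ↔ 2 • y = 0 := by
    rw [← doublingHom_castHom, map_eq_zero_iff _ (doublingHom_injective m)]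
  simp only [mem_fixedPoints, IsFixedPt, oneAddAntidiagEquiv, AddEquiv.coe_mk, Equiv.coe_fn_mk,
    antidiagHom_apply, add_eq_left, Prod.mk_eq_zero, hy, map_eq_zero_iff _ (doublingHom_injective m),
    two_nsmul_eq_zero_iff, Set.mem_insert_iff, Set.mem_singleton_iff, Prod.mk.injEq]
  tauto

theorem card_fixedPoints_oneAddAntidiagEquiv :
    Nat.card (fixedPoints (oneAddAntidiagEquiv m)) = 2 := by
  rw [Nat.card_coe_set_eq, fixedPoints_oneAddAntidiagEquiv, Set.ncard_pair]
  simpa [Prod.ext_iff] using (natCast_ne_zero_mul_two m).symm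

theorem nsmul_eq_zero_or_eq_mk_zero_natCast (p : ZMod m × ZMod (m * 2)) :
    m • p = 0 ∨ m • p = (0, (m : ZMod (m * 2))) := by
  have h1 : m • p.1 = 0 := by rw [nsmul_eq_mul, natCast_self, zero_mul]
  have h2 : 2 • m • p.2 = 0 := by
    rw [smul_smul, mul_comm 2 m, nsmul_eq_mul, natCast_self, zero_mul]
  rcases (two_nsmul_eq_zero_iff m).mp h2 with h | h
  · exact Or.inl (Prod.ext h1 h)
  · exact Or.inr (Prod.ext h1 h)

theorem addEquiv_apply_zero_natCast (φ : ZMod m × ZMod (m * 2) ≃+ ZMod m × ZMod (m * 2)) :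
    φ (0, (m : ZMod (m * 2))) = (0, (m : ZMod (m * 2))) := by
  have ht : ((0 : ZMod m), (m : ZMod (m * 2))) = m • (0, 1) := by simp
  have hne : ((0 : ZMod m), (m : ZMod (m * 2))) ≠ 0 := by
    simpa [Prod.ext_iff] using natCast_ne_zero_mul_two m
  have hφt : φ (0, (m : ZMod (m * 2))) = m • φ (0, 1) := by rw [ht, map_nsmul]
  rw [hφt]
  refine (nsmul_eq_zero_or_eq_mk_zero_natCast m _).resolve_left fun h => hne ?_
  rw [ht, ← map_eq_zero_iff φ φ.injective, map_nsmul, h]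

theorem one_lt_card_fixedPoints (φ : ZMod m × ZMod (m * 2) ≃+ ZMod m × ZMod (m * 2)) :
    1 < Nat.card (fixedPoints φ) := by
  rw [Nat.card_coe_set_eq, Set.one_lt_ncard_iff]
  refine ⟨0, _, map_zero φ, addEquiv_apply_zero_natCast m φ, ?_⟩
  simpa [Prod.ext_iff, eq_comm] using natCast_ne_zero_mul_two m

end DoubledProduct

theorem stmt_19_general (n : ℕ) :
    reidSpec (ZMod (2 ^ n) × ZMod (2 ^ (n + 1))) =
      {r | ∃ i, 1 ≤ i ∧ i ≤ 2 * n + 1 ∧ r = 2 ^ i} := by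
  rw [reidSpec_eq_range_card_fixedPoints]
  ext r
  constructor
  · rintro ⟨φ, rfl⟩
    have hdvd : Nat.card (fixedPoints φ) ∣ 2 ^ (2 * n + 1) := by
      simpa [Nat.card_prod, ← pow_add, two_mul, add_assoc] using
        card_fixedPoints_dvd_card φ.toAddMonoidHom
    obtain ⟨i, hi, hφ⟩ := (Nat.dvd_prime_pow Nat.prime_two).mp hdvd
    have hlt : 1 < 2 ^ i := hφ ▸ one_lt_card_fixedPoints (2 ^ n) φ
    exact ⟨i, Nat.pos_of_ne_zero (by rintro rfl; simp at hlt), hi, hφ⟩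
  · rintro ⟨i, hi1, hi, rfl⟩
    rcases hi1.eq_or_lt with rfl | hi2
    · exact ⟨_, card_fixedPoints_oneAddAntidiagEquiv (2 ^ n)⟩
    · obtain ⟨j, k, hj, hjn, hk, hkn, rfl⟩ :
          ∃ j k, 1 ≤ j ∧ j ≤ n ∧ 1 ≤ k ∧ k ≤ n + 1 ∧ i = j + k :=
        ⟨i - min (i - 1) (n + 1), min (i - 1) (n + 1), by omega, by omega, by omega, by omega,
          by omega⟩
      obtain ⟨ψ₁, hψ₁⟩ := ZMod.exists_addAut_card_fixedPoints_two_pow hj hjn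
      obtain ⟨ψ₂, hψ₂⟩ := ZMod.exists_addAut_card_fixedPoints_two_pow hk hkn
      exact ⟨ψ₁.prodCongr ψ₂, by simp only [card_fixedPoints_prodCongr, hψ₁, hψ₂, pow_add]⟩

theorem stmt_19 (n : ℕ) (hn : 1 ≤ n) :
    reidSpec (ZMod (2 ^ n) × ZMod (2 ^ (n + 1))) =
      {r | ∃ i, 1 ≤ i ∧ i ≤ 2 * n + 1 ∧ r = 2 ^ i} :=
  stmt_19_general n
end
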